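/- Ratio bound for the index-2 subgroup: let G be a finite group, H a subgroup of G of index 2, and C ⊆ H a subset closed under inverses with 1 ∉ C. Let A be a symmetric real matrix indexed by the elements of G such that A(g,h) = 0 whenever h g⁻¹ ∉ C, and such that every row of A sums to the same real number d. Let τ be the least eigenvalue of A and assume τ < 0 and τ < d. Then every subset F ⊆ H satisfying h g⁻¹ ∉ C for all g, h ∈ F has |F| ≤ (|G|/2) / (1 − d/τ); equivalently, |F|·(d − τ) ≤ (|G|/2)·(−τ). -/

import Mathlib

/-!
Hoffman's ratio argument run inside `H`. Since `C ⊆ H`, every nonzero entry `A g h` joins two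
elements of the same coset of `H`, so the indicator `v` of `H` is an eigenvector of `A` for `d`.
For the indicator `u` of the coclique `F ⊆ H` one has `uᵀ A u = 0`, and the Rayleigh bound
`τ ‖y‖² ≤ yᵀ A y` for `y = |H| u - |F| v` (the component of `u` orthogonal to `v`, scaled)
rearranges to `|F| (d - τ) ≤ |H| (-τ)`.
-/

open Matrix Finset

namespace Matrix

variable {n : Type*} [Fintype n]

theorem IsSymm.mul_dotProduct_self_le_dotProduct_mulVec {A : Matrix n n ℝ} (hA : A.IsSymm)
    {τ : ℝ} (hτ : ∀ μ : ℝ, (∃ x : n → ℝ, x ≠ 0 ∧ A *ᵥ x = μ • x) → τ ≤ μ) (x : n → ℝ) :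
    τ * (x ⬝ᵥ x) ≤ x ⬝ᵥ A *ᵥ x := by
  classical
  have hB : (A - τ • (1 : Matrix n n ℝ)).IsHermitian :=
    (isHermitian_iff_isSymm.mpr hA).sub (by simp [IsHermitian])
  have hB_eigenvalues_nonneg : ∀ i, 0 ≤ hB.eigenvalues i := by
    intro i
    have hv : (hB.eigenvectorBasis i : n → ℝ) ≠ 0 :=
      (WithLp.ofLp_eq_zero 2).ne.2 <| hB.eigenvectorBasis.orthonormal.ne_zero i
    have hAv : A *ᵥ hB.eigenvectorBasis i
        = (hB.eigenvalues i + τ) • (hB.eigenvectorBasis i : n → ℝ) := by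
      have := hB.mulVec_eigenvectorBasis i
      rw [sub_mulVec, smul_mulVec, one_mulVec, sub_eq_iff_eq_add] at this
      rw [this, add_smul]
    linarith [hτ _ ⟨_, hv, hAv⟩]
  have hpsd := (hB.posSemidef_iff_eigenvalues_nonneg.mpr hB_eigenvalues_nonneg)
    |>.dotProduct_mulVec_nonneg x
  simp only [star_trivial, sub_mulVec, smul_mulVec, one_mulVec, dotProduct_sub, dotProduct_smul,
    smul_eq_mul] at hpsd
  linarith

theorem indicator_one_dotProduct (S : Finset n) (w : n → ℝ) :
    (S : Set n).indicator 1 ⬝ᵥ w = ∑ i ∈ S, w i := by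
  classical
  simp [dotProduct, Set.indicator_apply]

theorem mulVec_indicator_one_of_adj_iff {A : Matrix n n ℝ} {d : ℝ}
    (hrow : A *ᵥ (fun _ => 1) = fun _ => d) (S : Set n)
    (hS : ∀ i j, A i j ≠ 0 → (i ∈ S ↔ j ∈ S)) :
    A *ᵥ S.indicator 1 = d • S.indicator 1 := by
  classical
  ext i
  by_cases hi : i ∈ S
  · have hterm : ∀ j, A i j * S.indicator 1 j = A i j := fun j => by
      by_cases hij : A i j = 0
      · simp [hij]
      · simp [Set.indicator_of_mem ((hS i j hij).mp hi)]
    simpa [mulVec, dotProduct, hterm, hi] using congrFun hrow i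
  · have hterm : ∀ j, A i j * S.indicator 1 j = 0 := fun j => by
      by_cases hij : A i j = 0
      · simp [hij]
      · simp [Set.indicator_of_notMem (mt (hS i j hij).mpr hi)]
    simp [mulVec, dotProduct, hterm, hi]

theorem indicator_one_dotProduct_indicator_one {S T : Finset n} (hTS : T ⊆ S) :
    (T : Set n).indicator 1 ⬝ᵥ (S : Set n).indicator (1 : n → ℝ) = #T := by
  rw [indicator_one_dotProduct,
    Finset.sum_congr rfl fun i hi => Set.indicator_of_mem (Finset.mem_coe.2 (hTS hi)) _]
  simp

theorem IsSymm.card_mul_sub_le_of_mulVec_indicator {A : Matrix n n ℝ} (hA : A.IsSymm)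
    {τ d : ℝ} (hτ : ∀ x : n → ℝ, τ * (x ⬝ᵥ x) ≤ x ⬝ᵥ A *ᵥ x) (hτ0 : τ ≤ 0)
    {S F : Finset n} (hFS : F ⊆ S)
    (hS : A *ᵥ (S : Set n).indicator 1 = d • (S : Set n).indicator 1)
    (hF : ∀ i ∈ F, ∀ j ∈ F, A i j = 0) :
    (#F : ℝ) * (d - τ) ≤ #S * (-τ) := by
  set u : n → ℝ := (F : Set n).indicator 1
  set v : n → ℝ := (S : Set n).indicator 1
  set f : ℝ := (#F : ℝ)
  set s : ℝ := (#S : ℝ)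
  have huu : u ⬝ᵥ u = f := indicator_one_dotProduct_indicator_one subset_rfl
  have huv : u ⬝ᵥ v = f := indicator_one_dotProduct_indicator_one hFS
  have hvv : v ⬝ᵥ v = s := indicator_one_dotProduct_indicator_one subset_rfl
  have huAu : u ⬝ᵥ A *ᵥ u = 0 := by
    rw [indicator_one_dotProduct]
    refine Finset.sum_eq_zero fun i hi => ?_
    simp only [mulVec, u, dotProduct_comm (A i), indicator_one_dotProduct]
    exact Finset.sum_eq_zero (hF i hi)
  have huAv : u ⬝ᵥ A *ᵥ v = d * f := by rw [hS, dotProduct_smul, huv, smul_eq_mul]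
  have hvAu : v ⬝ᵥ A *ᵥ u = d * f := by
    rw [dotProduct_mulVec, ← mulVec_transpose, hA.eq, dotProduct_comm, huAv]
  have hvAv : v ⬝ᵥ A *ᵥ v = d * s := by rw [hS, dotProduct_smul, hvv, smul_eq_mul]
  have hray := hτ (s • u - f • v)
  simp only [mulVec_sub, mulVec_smul, dotProduct_sub, sub_dotProduct, smul_dotProduct,
    dotProduct_smul, smul_eq_mul, dotProduct_comm v u, huu, huv, hvv, huAu, huAv, hvAu,
    hvAv] at hray
  have hfs : f ≤ s := Nat.cast_le.2 (card_le_card hFS)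
  have hf0 : 0 ≤ f := Nat.cast_nonneg _
  rcases hf0.eq_or_lt with hf | hf
  · rw [← hf]
    nlinarith [hf0.trans hfs]
  · -- `hray` reads `τ s f (s - f) ≤ -d s f²`; divide by `s f > 0`.
    have hsf : 0 < s * f := mul_pos (hf.trans_le hfs) hf
    nlinarith

end Matrix

theorem stmt_8_general {G : Type*} [Group G] [Fintype G]
    (H : Subgroup G) (hH : H.index = 2)
    (C : Set G) (hCH : C ⊆ (H : Set G))
    (A : Matrix G G ℝ) (d τ : ℝ)
    (hsymm : A.IsSymm)
    (hzero : ∀ g h : G, h * g⁻¹ ∉ C → A g h = 0)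
    (hrow : A.mulVec (fun _ => 1) = fun _ => d)
    (hτ_least : ∀ μ : ℝ, (∃ x : G → ℝ, x ≠ 0 ∧ A.mulVec x = μ • x) → τ ≤ μ)
    (hτneg : τ < 0)
    (F : Finset G) (hFH : ↑F ⊆ (H : Set G))
    (hF : ∀ g ∈ F, ∀ h ∈ F, h * g⁻¹ ∉ C) :
    (F.card : ℝ) * (d - τ) ≤ ((Fintype.card G : ℝ) / 2) * (-τ) := by
  classical
  set S : Finset G := (H : Set G).toFinset
  have hcard : (Fintype.card G : ℝ) / 2 = #S := by
    have hHS : Nat.card H = #S := Nat.card_eq_card_toFinset (H : Set G)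
    have hindex := H.card_mul_index
    rw [hH, hHS, Nat.card_eq_fintype_card] at hindex
    rw [← hindex]
    push_cast
    ring
  have hcoset : ∀ g h, A g h ≠ 0 → (g ∈ (H : Set G) ↔ h ∈ (H : Set G)) := by
    intro g h hgh
    have hhg : h * g⁻¹ ∈ H := hCH (not_not.mp (mt (hzero g h) hgh))
    simpa using (H.mul_mem_cancel_left hhg (y := g)).symm
  have hS := mulVec_indicator_one_of_adj_iff hrow _ hcoset
  rw [← Set.coe_toFinset (H : Set G)] at hS
  rw [hcard]
  exact hsymm.card_mul_sub_le_of_mulVec_indicator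
    (hsymm.mul_dotProduct_self_le_dotProduct_mulVec hτ_least) hτneg.le
    (Finset.coe_subset.mp (by simpa [S] using hFH)) hS
    (fun g hg h hh => hzero g h (hF g hg h hh))

/-- Ratio bound for the index-2 subgroup: with `A` a symmetric weighted adjacency matrix of
`Cay(G,C)` with constant row sum `d` and least eigenvalue `τ < 0`, `τ < d`, every
`C`-coclique `F` contained in the index-2 subgroup `H` satisfies
`|F| * (d - τ) ≤ (|G|/2) * (-τ)`. -/
theorem stmt_8 {G : Type*} [Group G] [Fintype G] [DecidableEq G]
    (H : Subgroup G) (hH : H.index = 2)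
    (C : Set G) (hCH : C ⊆ (H : Set G)) (hCinv : ∀ c ∈ C, c⁻¹ ∈ C)
    (hC1 : (1 : G) ∉ C)
    (A : Matrix G G ℝ) (d τ : ℝ)
    (hsymm : A.IsSymm)
    (hzero : ∀ g h : G, h * g⁻¹ ∉ C → A g h = 0)
    (hrow : A.mulVec (fun _ => 1) = fun _ => d)
    (hτ_eig : ∃ x : G → ℝ, x ≠ 0 ∧ A.mulVec x = τ • x)
    (hτ_least : ∀ μ : ℝ, (∃ x : G → ℝ, x ≠ 0 ∧ A.mulVec x = μ • x) → τ ≤ μ)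
    (hτneg : τ < 0) (hτd : τ < d)
    (F : Finset G) (hFH : ↑F ⊆ (H : Set G))
    (hF : ∀ g ∈ F, ∀ h ∈ F, h * g⁻¹ ∉ C) :
    (F.card : ℝ) * (d - τ) ≤ ((Fintype.card G : ℝ) / 2) * (-τ) :=
  stmt_8_general H hH C hCH A d τ hsymm hzero hrow hτ_least hτneg F hFH hF
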